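/- Level Substitution Lemma for λ[]: if Ψ;Γ₀;Δ₁;…;Δ_l ⊢ M : T is derivable in variant 𝔸 of λ[], then for any contexts Γ₁,…,Γₙ with dom(Γₙ) ∩ dom(Δ₁) = ∅, the judgment Ψ;Γ₀;Γ₁;…;(Γₙ,Δ₁);Δ₂;…;Δ_l ⊢ M↑ⁿ_l : T is also derivable, where the admissible n depends on the variant: n = 1 in K, n ∈ {0,1} in T, n ≥ 1 in K4, and n ≥ 0 in S4. -/
import Mathlib


/-! # Fitch-style contextual modal type theory λ[] -/

/-- Types of λ[]: base types, function types, contextual modal types `[S⃗]T`. -/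
inductive Ty : Type where
  | base : ℕ → Ty
  | arr : Ty → Ty → Ty
  | box : List Ty → Ty → Ty

/-- A context is a finite list of (variable, type) pairs. -/
abbrev Ctx := List (ℕ × Ty)
/-- A context stack; the head is the innermost (object-level) context Γ₁. -/
abbrev Stack := List Ctx

/-- The range (list of types) of a context. -/
def rngC (Γ : Ctx) : List Ty := Γ.map Prod.snd
/-- The domain (list of variables) of a context. -/
def domC (Γ : Ctx) : List ℕ := Γ.map Prod.fst

/-- Terms of λ[]. -/
inductive Tm : Type where
  | var : ℕ → Tm
  | lam : ℕ → Ty → Tm → Tm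
  | app : Tm → Tm → Tm
  | quo : Ctx → Tm → Tm
  | unq : ℕ → Tm → List Tm → Tm

/-- The four modal variants of λ[]. -/
inductive Variant : Type where
  | K | T | K4 | S4

/-- Admissible unquotation levels for each variant. -/
def Variant.allows : Variant → ℕ → Prop
  | .K, n => n = 1
  | .T, n => n ≤ 1
  | .K4, n => 1 ≤ n
  | .S4, _ => True

mutual
/-- Typing judgment `Ψ ⊢ M : T` of λ[] (variant `v`). -/
inductive Typed (v : Variant) : Stack → Tm → Ty → Prop where
  | var {Γ : Ctx} {Ψ : Stack} {x : ℕ} {T : Ty} :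
      (x, T) ∈ Γ → Typed v (Γ :: Ψ) (.var x) T
  | lam {Γ : Ctx} {Ψ : Stack} {x : ℕ} {T S : Ty} {M : Tm} :
      Typed v ((Γ ++ [(x, T)]) :: Ψ) M S →
      Typed v (Γ :: Ψ) (.lam x T M) (.arr T S)
  | app {Γ : Ctx} {Ψ : Stack} {M N : Tm} {T S : Ty} :
      Typed v (Γ :: Ψ) M (.arr T S) → Typed v (Γ :: Ψ) N T →
      Typed v (Γ :: Ψ) (.app M N) S
  | quo {Γ : Ctx} {Ψ : Stack} {M : Tm} {T : Ty} :
      Typed v (Γ :: Ψ) M T → Typed v Ψ (.quo Γ M) (.box (rngC Γ) T)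
  | unq {Ψ Δs : Stack} {M : Tm} {S : Ty} {n : ℕ} {Ns : List Tm} {Ts : List Ty} :
      v.allows n → Δs.length = n →
      Typed v Ψ M (.box Ts S) →
      TypedSeq v (Δs ++ Ψ) Ns Ts →
      Typed v (Δs ++ Ψ) (.unq n M Ns) S

/-- Sequence typing judgment `Ψ ⊢ N⃗ : T⃗` of λ[] ((Unit) and (Seq) rules). -/
inductive TypedSeq (v : Variant) : Stack → List Tm → List Ty → Prop where
  | nil {Ψ : Stack} : TypedSeq v Ψ [] []
  | cons {Ψ : Stack} {Ns : List Tm} {Ts : List Ty} {M : Tm} {T : Ty} :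
      TypedSeq v Ψ Ns Ts → Typed v Ψ M T →
      TypedSeq v Ψ (Ns ++ [M]) (Ts ++ [T])
end

/-- Substitution contents `σ`. -/
abbrev Subc := List (ℕ × Tm)

/-- Level-`l` substitution `M[σ]_l` (α-renaming being handled implicitly,
following the paper's convention). -/
def Tm.subst (σ : Subc) : ℕ → Tm → Tm
  | l, .var x => if l = 1 then (σ.lookup x).getD (.var x) else .var x
  | l, .lam x T M => .lam x T (M.subst σ l)
  | l, .app M N => .app (M.subst σ l) (N.subst σ l)
  | l, .quo Γ M => .quo Γ (M.subst σ (l + 1))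
  | l, .unq k M Ns =>
      .unq k (if l ≤ k then M else M.subst σ (l - k))
        (Ns.attach.map (fun ⟨N, hN⟩ => N.subst σ l))
termination_by l M => sizeOf M
decreasing_by
  all_goals simp_wf
  all_goals try omega
  all_goals (have := List.sizeOf_lt_of_mem hN; omega)

/-- Level substitution `M↑ᵏ_l`. -/
def Tm.lsub (k : ℕ) : ℕ → Tm → Tm
  | _, .var x => .var x
  | l, .lam x T M => .lam x T (M.lsub k l)
  | l, .app M N => .app (M.lsub k l) (N.lsub k l)
  | l, .quo Γ M => .quo Γ (M.lsub k (l + 1))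
  | l, .unq k' M Ns =>
      .unq (if l ≤ k' then k' + k - 1 else k')
        (if l ≤ k' then M else M.lsub k (l - k'))
        (Ns.attach.map (fun ⟨N, hN⟩ => N.lsub k l))
termination_by l M => sizeOf M
decreasing_by
  all_goals simp_wf
  all_goals try omega
  all_goals (have := List.sizeOf_lt_of_mem hN; omega)

/-- Level-`l` free variables `FV_l(M)`. -/
def Tm.fv : ℕ → Tm → Finset ℕ
  | l, .var x => if l = 1 then {x} else ∅
  | l, .lam x _ M => if l = 1 then (M.fv l).erase x else M.fv l
  | l, .app M N => M.fv l ∪ N.fv l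
  | l, .quo _ M => M.fv (l + 1)
  | l, .unq k M Ns =>
      (if l ≤ k then ∅ else M.fv (l - k)) ∪
        (Ns.attach.map (fun ⟨N, hN⟩ => N.fv l)).foldr (· ∪ ·) ∅
termination_by l M => sizeOf M
decreasing_by
  all_goals simp_wf
  all_goals try omega
  all_goals (have := List.sizeOf_lt_of_mem hN; omega)

/-- β-reduction of λ[] (congruence closure of the two redex rules). -/
inductive Beta : Tm → Tm → Prop where
  | beta {x : ℕ} {T : Ty} {M N : Tm} :
      Beta (.app (.lam x T M) N) (M.subst [(x, N)] 1)
  | unqQuo {n : ℕ} {Γ : Ctx} {M : Tm} {Ns : List Tm} :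
      Ns.length = Γ.length →
      Beta (.unq n (.quo Γ M) Ns) ((M.lsub n 1).subst ((domC Γ).zip Ns) 1)
  | lam {x T M M'} : Beta M M' → Beta (.lam x T M) (.lam x T M')
  | appL {M M' N} : Beta M M' → Beta (.app M N) (.app M' N)
  | appR {M N N'} : Beta N N' → Beta (.app M N) (.app M N')
  | quo {Γ M M'} : Beta M M' → Beta (.quo Γ M) (.quo Γ M')
  | unqHead {n M M' Ns} : Beta M M' → Beta (.unq n M Ns) (.unq n M' Ns)
  | unqArg {n M N N' L₁ L₂} : Beta N N' →
      Beta (.unq n M (L₁ ++ N :: L₂)) (.unq n M (L₁ ++ N' :: L₂))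

@[simp] lemma lsub_var {x n l} : (Tm.var x).lsub n l = .var x := by simp [Tm.lsub]
@[simp] lemma lsub_lam {x T M n l} : (Tm.lam x T M).lsub n l = .lam x T (M.lsub n l) := by
  simp [Tm.lsub]
@[simp] lemma lsub_app {M N n l} : (Tm.app M N).lsub n l = .app (M.lsub n l) (N.lsub n l) := by
  simp [Tm.lsub]
@[simp] lemma lsub_quo {Γ M n l} : (Tm.quo Γ M).lsub n l = .quo Γ (M.lsub n (l+1)) := by
  simp [Tm.lsub]
lemma lsub_unq {k M Ns n l} : (Tm.unq k M Ns).lsub n l =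
    .unq (if l ≤ k then k + n - 1 else k) (if l ≤ k then M else M.lsub n (l - k))
      (Ns.map (·.lsub n l)) := by
  rw [Tm.lsub]
  simp

def CtxLE (Γ Γ' : Ctx) : Prop := ∀ p ∈ Γ, p ∈ Γ'

theorem CtxLE.refl (Γ : Ctx) : CtxLE Γ Γ := fun _ hp => hp

theorem CtxLE.push {Γ Γ' : Ctx} (h : CtxLE Γ Γ') (p : ℕ × Ty) :
    CtxLE (Γ ++ [p]) (Γ' ++ [p]) := fun q hq => by
  rcases List.mem_append.1 hq with h' | h'
  · exact List.mem_append_left _ (h _ h')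
  · exact List.mem_append_right _ h'

theorem forall₂_split {α β} {R : α → β → Prop} : ∀ {a b : List α} {c : List β},
    List.Forall₂ R (a ++ b) c → ∃ c1 c2, c = c1 ++ c2 ∧ List.Forall₂ R a c1 ∧ List.Forall₂ R b c2
  | [], _, c, h => ⟨[], c, rfl, .nil, h⟩
  | x :: a, b, _, .cons hx h =>
      let ⟨c1, c2, heq, h1, h2⟩ := forall₂_split h
      ⟨_ :: c1, c2, by rw [heq]; rfl, .cons hx h1, h2⟩

lemma stackLE_refl : ∀ (Ψ : Stack), List.Forall₂ CtxLE Ψ Ψ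
  | [] => .nil
  | _ :: Ψ => .cons (CtxLE.refl _) (stackLE_refl Ψ)

/-- Weakening: enlarging any context in the stack preserves typing. -/
theorem weaken {v : Variant} {Ψ : Stack} {M : Tm} {T : Ty} (h : Typed v Ψ M T) :
    ∀ {Ψ'}, List.Forall₂ CtxLE Ψ Ψ' → Typed v Ψ' M T := by
  induction h using Typed.rec
    (motive_2 := fun Ψ Ns Ts _ =>
      ∀ {Ψ'}, List.Forall₂ CtxLE Ψ Ψ' → TypedSeq v Ψ' Ns Ts) with
  | var hmem =>
      intro Ψ' hle
      rcases hle with _ | ⟨hΓ, hrest⟩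
      exact .var (hΓ _ hmem)
  | lam _ ih =>
      intro Ψ' hle
      rcases hle with _ | ⟨hΓ, hrest⟩
      exact .lam (ih (.cons (hΓ.push _) hrest))
  | app _ _ ih1 ih2 =>
      intro Ψ' hle
      rcases hle with _ | ⟨hΓ, hrest⟩
      exact .app (ih1 (.cons hΓ hrest)) (ih2 (.cons hΓ hrest))
  | quo _ ih =>
      intro Ψ' hle
      exact .quo (ih (.cons (CtxLE.refl _) hle))
  | unq hallow hlen _ _ ihM ihNs =>
      intro Ψ' hle
      obtain ⟨c1, c2, rfl, h1, h2⟩ := forall₂_split hle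
      exact .unq hallow (h1.length_eq ▸ hlen) (ihM h2)
        (ihNs (List.rel_append h1 h2))
  | nil => exact .nil
  | cons _ _ ih1 ih2 => exact .cons (ih1 ‹_›) (ih2 ‹_›)

lemma append_split {α} : ∀ {c a : List α} {b d : List α},
    a ++ b = c ++ d → c.length ≤ a.length → ∃ e, a = c ++ e ∧ e ++ b = d
  | [], a, b, d, h, _ => ⟨a, rfl, h⟩
  | x :: c, [], b, d, h, hl => by simp at hl
  | x :: c, y :: a, b, d, h, hl => by
      simp only [List.cons_append, List.cons.injEq] at h
      obtain ⟨rfl, h⟩ := h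
      obtain ⟨e, rfl, he⟩ := append_split h (by simpa using hl)
      exact ⟨e, rfl, he⟩

lemma allows_comb {v : Variant} {n k : ℕ} (h1 : v.allows n) (h2 : v.allows k)
    (hk : 1 ≤ k) : v.allows (k + n - 1) := by
  cases v <;> simp [Variant.allows] at * <;> omega

/-- The replacement for the segment `Δ1 :: Γ0 :: Ψ0` of the stack. -/
def ins (Γ0 : Ctx) (Ψ0 : Stack) (Γs : Stack) (Δ1 : Ctx) : Stack :=
  match Γs with
  | [] => (Γ0 ++ Δ1) :: Ψ0
  | Γn :: rest => (Γn ++ Δ1) :: (rest ++ Γ0 :: Ψ0)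

theorem lsub_typed {v : Variant} {Γ0 : Ctx} {Ψ0 : Stack} {Γs : Stack} {n : ℕ}
    (hallow : v.allows n) (hlen : Γs.length = n) :
    ∀ {Ψ' M T}, Typed v Ψ' M T → ∀ (Δ1 : Ctx) (Δs : Stack), Ψ' = Δs ++ Δ1 :: Γ0 :: Ψ0 →
      Typed v (Δs ++ ins Γ0 Ψ0 Γs Δ1) (M.lsub n (Δs.length + 1)) T := by
  intro Ψ' M T h
  induction h using Typed.rec
    (motive_2 := fun Ψ' Ns Ts _ => ∀ (Δ1 : Ctx) (Δs : Stack), Ψ' = Δs ++ Δ1 :: Γ0 :: Ψ0 →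
      TypedSeq v (Δs ++ ins Γ0 Ψ0 Γs Δ1) (Ns.map (·.lsub n (Δs.length + 1))) Ts) with
  | @var Γr Ψr x T' hmem =>
      intro Δ1 Δs heq
      simp only [lsub_var]
      cases Δs with
      | nil =>
          simp only [List.nil_append, List.cons.injEq] at heq
          obtain ⟨h1, -⟩ := heq
          subst h1
          cases Γs <;> simp only [ins, List.nil_append] <;>
            exact .var (List.mem_append_right _ hmem)
      | cons Γ' Δs' =>
          simp only [List.cons_append, List.cons.injEq] at heq
          obtain ⟨h1, -⟩ := heq
          subst h1
          exact .var hmem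
  | @lam Γr Ψr x T' S' Mb _ ih =>
      intro Δ1 Δs heq
      simp only [lsub_lam]
      cases Δs with
      | nil =>
          simp only [List.nil_append, List.cons.injEq] at heq
          obtain ⟨h1, rfl⟩ := heq
          subst h1
          have := ih (Γr ++ [(x, T')]) [] (by simp)
          simp only [List.nil_append, List.length_nil] at this ⊢
          cases Γs with
          | nil => exact .lam (by simpa [ins, List.append_assoc] using this)
          | cons Γn rest => exact .lam (by simpa [ins, List.append_assoc] using this)
      | cons Γ' Δs' =>
          simp only [List.cons_append, List.cons.injEq] at heq
          obtain ⟨h1, rfl⟩ := heq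
          subst h1
          have := ih Δ1 ((Γr ++ [(x, T')]) :: Δs') (by simp)
          simpa using .lam (by simpa using this)
  | @app Γr Ψr Mb Nb T' S' _ _ ih1 ih2 =>
      intro Δ1 Δs heq
      simp only [lsub_app]
      cases Δs with
      | nil =>
          simp only [List.nil_append, List.cons.injEq] at heq
          obtain ⟨h1, rfl⟩ := heq
          subst h1
          have h1 := ih1 Γr [] rfl
          have h2 := ih2 Γr [] rfl
          cases Γs with
          | nil =>
              simp only [ins, List.nil_append, List.length_nil] at h1 h2 ⊢
              exact .app h1 h2
          | cons Γn rest =>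
              simp only [ins, List.nil_append, List.length_nil] at h1 h2 ⊢
              exact .app h1 h2
      | cons Γ' Δs' =>
          simp only [List.cons_append, List.cons.injEq] at heq
          obtain ⟨h1, rfl⟩ := heq
          subst h1
          have h1 := ih1 Δ1 (Γr :: Δs') rfl
          have h2 := ih2 Δ1 (Γr :: Δs') rfl
          simpa using .app (by simpa using h1) (by simpa using h2)
  | @quo Γr Ψr Mb T' _ ih =>
      intro Δ1 Δs heq
      subst heq
      have := ih Δ1 (Γr :: Δs) rfl
      simpa using .quo (by simpa using this)
  | @unq Ψ₂ Δr Mb S' k Ns Ts hallow' hlenΔ hM hNs ihM ihNs =>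
      intro Δ1 Δs heq
      rw [lsub_unq]
      by_cases hlk : Δs.length + 1 ≤ k
      · rw [if_pos hlk, if_pos hlk]
        obtain ⟨e, rfl, he⟩ := append_split heq (by omega)
        cases e with
        | nil => exfalso; simp at hlenΔ; omega
        | cons Δ1' e' =>
            simp only [List.cons_append, List.cons.injEq] at he
            obtain ⟨h1, he⟩ := he
            cases e' with
            | nil =>
                simp only [List.nil_append] at he
                subst he
                have hk1 : k = Δs.length + 1 := by simp at hlenΔ; omega
                cases Γs with
                | nil =>
                    simp only [List.length_nil] at hlen
                    subst hlen
                    simp only [ins]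
                    exact Typed.unq (Δs := Δs) (Ψ := (Γ0 ++ Δ1) :: Ψ0)
                      (allows_comb hallow hallow' (by omega)) (by omega)
                      (weaken hM (.cons (fun p hp => List.mem_append_left _ hp)
                        (stackLE_refl _)))
                      (by simpa [ins] using ihNs Δ1 Δs (by simp [h1]))
                | cons Γn rest =>
                    simp only [ins]
                    have hstack : Δs ++ (Γn ++ Δ1) :: (rest ++ Γ0 :: Ψ0) =
                        (Δs ++ (Γn ++ Δ1) :: rest) ++ Γ0 :: Ψ0 := by simp
                    rw [hstack]
                    refine Typed.unq (Δs := Δs ++ (Γn ++ Δ1) :: rest)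
                      (allows_comb hallow hallow' (by omega))
                      (by simp only [List.length_cons] at hlen
                          simp only [List.length_append, List.length_cons]; omega)
                      hM ?_
                    rw [← hstack]
                    simpa [ins] using ihNs Δ1 Δs (by simp [h1])
            | cons Γ0' e'' =>
                simp only [List.cons_append, List.cons.injEq] at he
                obtain ⟨h2, h3⟩ := he
                have hk2 : k = Δs.length + 2 + e''.length := by
                  simp only [List.length_append, List.length_cons] at hlenΔ; omega
                have hseq : (Δs ++ Δ1' :: Γ0' :: e'') ++ Ψ₂ = Δs ++ Δ1 :: Γ0 :: Ψ0 := by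
                  simp [h1, h2, List.append_assoc, h3]
                cases Γs with
                | nil =>
                    simp only [List.length_nil] at hlen
                    subst hlen
                    simp only [ins]
                    have hstack : Δs ++ (Γ0 ++ Δ1) :: Ψ0 =
                        (Δs ++ (Γ0 ++ Δ1) :: e'') ++ Ψ₂ := by rw [← h3]; simp
                    rw [hstack]
                    refine Typed.unq (Δs := Δs ++ (Γ0 ++ Δ1) :: e'')
                      (allows_comb hallow hallow' (by omega))
                      (by simp only [List.length_append, List.length_cons]; omega)
                      hM ?_
                    rw [← hstack]
                    simpa [ins] using ihNs Δ1 Δs hseq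
                | cons Γn rest =>
                    simp only [ins]
                    have hstack : Δs ++ (Γn ++ Δ1) :: (rest ++ Γ0 :: Ψ0) =
                        (Δs ++ (Γn ++ Δ1) :: (rest ++ Γ0 :: e'')) ++ Ψ₂ := by
                      rw [← h3]; simp
                    rw [hstack]
                    refine Typed.unq (Δs := Δs ++ (Γn ++ Δ1) :: (rest ++ Γ0 :: e''))
                      (allows_comb hallow hallow' (by omega))
                      (by simp only [List.length_cons] at hlen
                          simp only [List.length_append, List.length_cons]; omega)
                      hM ?_
                    rw [← hstack]
                    simpa [ins] using ihNs Δ1 Δs hseq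
      · rw [if_neg hlk, if_neg hlk]
        obtain ⟨e, rfl, he⟩ := append_split heq.symm (by omega)
        have hM' := ihM Δ1 e he.symm
        have harith : (Δr ++ e).length + 1 - k = e.length + 1 := by
          simp only [List.length_append]; omega
        rw [harith, List.append_assoc]
        refine Typed.unq hallow' hlenΔ hM' ?_
        rw [← List.append_assoc]
        exact ihNs Δ1 (Δr ++ e) (by rw [← he]; simp)
  | nil => exact .nil
  | cons _ _ ih1 ih2 =>
      rename_i heq
      have h1 := ih1 _ _ heq
      have h2 := ih2 _ _ heq
      simpa using .cons h1 h2

/-- **Level Substitution Lemma** (Lemma 2).  If `Ψ;Γ₀;Δ₁;…;Δ_l ⊢ M : T` is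
derivable in variant 𝔸 of λ[], then for any contexts `Γ₁,…,Γₙ` (here
`Γs = [Γₙ,…,Γ₁]`, innermost first) with `dom(Γₙ) ∩ dom(Δ₁) = ∅`, the judgment
`Ψ;Γ₀;Γ₁;…;(Γₙ,Δ₁);Δ₂;…;Δ_l ⊢ M↑ⁿ_l : T` is derivable, where `n` is admissible
for the variant (`n = 1` in K, `n ≤ 1` in T, `n ≥ 1` in K4, any `n` in S4).
Here `Δs = [Δ_l,…,Δ₂]` and `l = Δs.length + 1`. -/
theorem level_substitution_lemma (v : Variant) (Ψ : Stack) (Γ0 Δ1 : Ctx)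
    (Δs : Stack) (M : Tm) (T : Ty) (n : ℕ) (Γs : Stack)
    (hallow : v.allows n) (hlen : Γs.length = n)
    (hdisj : ∀ Γn, Γs.head? = some Γn → ∀ x ∈ domC Γn, x ∉ domC Δ1)
    (h : Typed v (Δs ++ Δ1 :: Γ0 :: Ψ) M T) :
    Typed v
      (Δs ++ (match Γs with
        | [] => (Γ0 ++ Δ1) :: Ψ
        | Γn :: rest => (Γn ++ Δ1) :: (rest ++ Γ0 :: Ψ)))
      (M.lsub n (Δs.length + 1)) T := by
  have h' := lsub_typed (Ψ0 := Ψ) hallow hlen h Δ1 Δs rfl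
  cases Γs with
  | nil => simpa [ins] using h'
  | cons Γn rest => simpa [ins] using h'
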